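/- arXiv:2206.01853 — 2 statements merged into one kernel-verified Lean document; each statement's English description precedes it below -/
import Mathlib

section
/- Let $k_{ij}$ be a fixed symmetric real array and $\pi$ a uniformly random permutation of $\{1,\dots,n\}$. Define $\alpha(t) = \frac{1}{t(t-1)} \sum_{i \ne j,\ \pi(i) \le t,\ \pi(j) \le t} k_{ij}$. Then $\mathrm{Var}(\alpha(t)) = \frac{2 R_1 p_1(t) + 4 R_2 p_2(t) + R_3 p_3(t)}{t^2(t-1)^2} - \bar{k}^2$, where $R_1 = \sum_{i \ne j} k_{ij}^2$, $R_2 = \sum_{i \ne j \ne u, u \ne i} k_{ij} k_{iu}$, $R_3 = \sum_{i,j,u,v \text{ distinct}} k_{ij} k_{uv}$, $\bar{k} = \frac{1}{n(n-1)}\sum_{i\ne j} k_{ij}$, $p_1(t) = \frac{t(t-1)}{n(n-1)}$, $p_2(t) = p_1(t)\frac{t-2}{n-2}$, $p_3(t) = p_2(t)\frac{t-3}{n-3}$. -/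
open Finset

/-!
Write `α(t) = S(π) / (t(t-1))` with `S(π) = ∑_{i ≠ j} k i j [π i < t] [π j < t]`.
Both moments of `S` are sums of products of indicators `[π maps s into {0, …, t-1}]` for
`|s| ≤ 4`, and such an indicator has mean `(t)_m / (n)_m` with `m = |s|`: `Perm (Fin n)` acts
transitively on the embeddings `s ↪ Fin n`, so `π|_s` is uniformly distributed among them. The
mean is then `k̄`; for the second moment, the pairs `(i, j)`, `(u, v)` are sorted by the size of
`{i, j, u, v}`, which produces `R₁`, `R₂`, `R₃` with the falling-factorial ratios `p₁, p₂, p₃`.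
-/

open Nat

theorem Finset.sum_eq_add_add_sum_erase_erase {α β : Type*} [DecidableEq α] [AddCommMonoid β]
    {s : Finset α} {i j : α} (hi : i ∈ s) (hj : j ∈ s) (hij : i ≠ j) (f : α → β) :
    ∑ x ∈ s, f x = f i + f j + ∑ x ∈ (s.erase i).erase j, f x := by
  rw [← add_sum_erase s f hi, ← add_sum_erase (s.erase i) f (mem_erase.2 ⟨hij.symm, hj⟩),
    add_assoc]

theorem Finset.sum_univ_sum_erase_comm {α β : Type*} [Fintype α] [DecidableEq α]
    [AddCommMonoid β] (f : α → α → β) :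
    ∑ i, ∑ j ∈ univ.erase i, f i j = ∑ i, ∑ j ∈ univ.erase i, f j i :=
  sum_comm' (by simp [and_comm, ne_comm])

theorem MulAction.card_filter_smul_eq_of_smul_eq {G X : Type*} [Group G] [Fintype G]
    [MulAction G X] [DecidableEq X] {x y : X} {g₀ : G} (h : g₀ • x = y) :
    #{g : G | g • x = y} = #{g : G | g • x = x} := by
  subst h
  refine card_nbij' (g₀⁻¹ * ·) (g₀ * ·) ?_ ?_ ?_ ?_ <;> intro g <;>
    simp [mul_smul, smul_eq_iff_eq_inv_smul]

namespace Equiv.Perm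

variable {α : Type*} [Fintype α] [DecidableEq α]

theorem card_filter_mapsTo_mul_descFactorial (s T : Finset α) :
    #{σ : Perm α | ∀ x ∈ s, σ x ∈ T} * (Fintype.card α).descFactorial #s
      = (#T).descFactorial #s * (Fintype.card α)! := by
  let ι : s ↪ α := Function.Embedding.subtype _
  set F := #{σ : Perm α | σ • ι = ι}
  have hfiber (y : s ↪ α) : #{σ : Perm α | σ • ι = y} = F := by
    obtain ⟨σ, hσ⟩ := exists_smul_eq_embedding ι y
    exact MulAction.card_filter_smul_eq_of_smul_eq hσ
  have htotal : (Fintype.card α)! = (Fintype.card α).descFactorial #s * F := by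
    rw [← Fintype.card_perm, ← Finset.card_univ,
      card_eq_sum_card_fiberwise (f := (· • ι)) (t := univ) (by simp),
      sum_const_nat fun y _ => hfiber y, Finset.card_univ, Fintype.card_embedding_eq]
    simp
  have hinto : #{y : s ↪ α | ∀ a, y a ∈ T} = (#T).descFactorial #s := by
    rw [← Fintype.card_subtype]
    exact (Fintype.card_congr (Equiv.codRestrict s (T : Set α))).trans
      (by simp [Fintype.card_embedding_eq])
  have hgood : #{σ : Perm α | ∀ x ∈ s, σ x ∈ T} = (#T).descFactorial #s * F := by
    rw [← hinto, ← sum_const_nat fun y _ => hfiber y, sum_card_fiberwise_eq_card_filter]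
    congr 1
    ext σ
    simp [ι, Function.Embedding.smul_apply]
  rw [htotal, hgood]
  ring

end Equiv.Perm

noncomputable section

variable {α : Type*} [Fintype α]

def mapsToProb (T : Finset α) (m : ℕ) : ℝ :=
  (#T).descFactorial m / (Fintype.card α).descFactorial m

theorem mapsToProb_two (T : Finset α) :
    mapsToProb T 2 = #T * (#T - 1 : ℝ) / (Fintype.card α * (Fintype.card α - 1 : ℝ)) := by
  simp only [mapsToProb, Nat.cast_descFactorial_two]

theorem mapsToProb_succ (T : Finset α) (m : ℕ) :
    mapsToProb T (m + 1) = mapsToProb T m * ((#T - m : ℝ) / (Fintype.card α - m)) := by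
  simp only [mapsToProb, ← descPochhammer_eval_eq_descFactorial ℝ, descPochhammer_succ_eval,
    mul_div_mul_comm]

variable [DecidableEq α]

def mapsToIndicator (T : Finset α) (σ : Equiv.Perm α) (s : Finset α) : ℝ :=
  if ∀ x ∈ s, σ x ∈ T then 1 else 0

theorem mapsToIndicator_mul (T : Finset α) (σ : Equiv.Perm α) (s s' : Finset α) :
    mapsToIndicator T σ s * mapsToIndicator T σ s' = mapsToIndicator T σ (s ∪ s') := by
  simp only [mapsToIndicator, forall_mem_union, ite_zero_mul_ite_zero, mul_one]

theorem sum_mapsToIndicator (T s : Finset α) :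
    ∑ σ, mapsToIndicator T σ s = (Fintype.card α)! * mapsToProb T #s := by
  have hpos : ((Fintype.card α).descFactorial #s : ℝ) ≠ 0 := by
    exact_mod_cast (Nat.descFactorial_pos.mpr (card_le_univ s)).ne'
  unfold mapsToIndicator
  rw [sum_boole, mapsToProb, mul_div_assoc', eq_div_iff hpos]
  exact_mod_cast (Equiv.Perm.card_filter_mapsTo_mul_descFactorial s T).trans (mul_comm _ _)

def pairSumWithin (T : Finset α) (k : α → α → ℝ) (σ : Equiv.Perm α) : ℝ :=
  ∑ i, ∑ j ∈ univ.erase i, if σ i ∈ T ∧ σ j ∈ T then k i j else 0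

theorem pairSumWithin_eq_sum_mapsToIndicator (T : Finset α) (k : α → α → ℝ)
    (σ : Equiv.Perm α) :
    pairSumWithin T k σ = ∑ i, ∑ j ∈ univ.erase i, k i j * mapsToIndicator T σ {i, j} := by
  simp [pairSumWithin, mapsToIndicator]

theorem sum_pairSumWithin (T : Finset α) (k : α → α → ℝ) :
    ∑ σ, pairSumWithin T k σ
      = (Fintype.card α)! * ((∑ i, ∑ j ∈ univ.erase i, k i j) * mapsToProb T 2) := by
  calc ∑ σ, pairSumWithin T k σ
      = ∑ i, ∑ j ∈ univ.erase i, k i j * ∑ σ, mapsToIndicator T σ {i, j} := by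
        simp only [pairSumWithin_eq_sum_mapsToIndicator, mul_sum]
        rw [sum_comm]
        exact sum_congr rfl fun i _ => sum_comm
    _ = ∑ i, ∑ j ∈ univ.erase i, k i j * ((Fintype.card α)! * mapsToProb T 2) := by
        refine sum_congr rfl fun i _ => sum_congr rfl fun j hj => ?_
        rw [sum_mapsToIndicator, card_pair (ne_of_mem_erase hj).symm]
    _ = _ := by simp only [← sum_mul]; ring

theorem sum_pairSumWithin_sq (T : Finset α) (k : α → α → ℝ) :
    ∑ σ, pairSumWithin T k σ ^ 2 = (Fintype.card α)! * ∑ i, ∑ j ∈ univ.erase i,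
      ∑ u, ∑ v ∈ univ.erase u, k i j * k u v * mapsToProb T #({i, j} ∪ {u, v}) := by
  have hsq (σ : Equiv.Perm α) : pairSumWithin T k σ ^ 2 = ∑ i, ∑ j ∈ univ.erase i,
      ∑ u, ∑ v ∈ univ.erase u, k i j * k u v * mapsToIndicator T σ ({i, j} ∪ {u, v}) := by
    simp only [pairSumWithin_eq_sum_mapsToIndicator, sq, sum_mul_sum]
    refine sum_congr rfl fun i _ => ?_
    rw [sum_comm]
    refine sum_congr rfl fun j _ => sum_congr rfl fun u _ => sum_congr rfl fun v _ => ?_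
    rw [← mapsToIndicator_mul]
    ring
  simp only [hsq, mul_sum]
  rw [sum_comm]
  refine sum_congr rfl fun i _ => ?_
  rw [sum_comm]
  refine sum_congr rfl fun j _ => ?_
  rw [sum_comm]
  refine sum_congr rfl fun u _ => ?_
  rw [sum_comm]
  refine sum_congr rfl fun v _ => ?_
  rw [← mul_sum, sum_mapsToIndicator]
  ring

theorem sum_offDiag_mul_card_union_pair {k : α → α → ℝ} (hk : ∀ i j, k i j = k j i)
    (c : ℕ → ℝ) {i j : α} (hij : i ≠ j) :
    ∑ u, ∑ v ∈ univ.erase u, k u v * c #({i, j} ∪ {u, v})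
      = 2 * k i j * c 2 + 2 * (∑ v ∈ (univ.erase i).erase j, (k i v + k j v)) * c 3
        + (∑ u ∈ (univ.erase i).erase j, ∑ v ∈ ((univ.erase i).erase j).erase u, k u v) * c 4 := by
  set r := (univ.erase i).erase j
  have mem_r {v : α} : v ∈ r ↔ v ≠ j ∧ v ≠ i := by simp [r]
  have hi : ∑ v ∈ univ.erase i, k i v * c #({i, j} ∪ {i, v})
      = k i j * c 2 + ∑ v ∈ r, k i v * c 3 := by
    rw [← add_sum_erase _ _ (mem_erase.2 ⟨hij.symm, mem_univ j⟩)]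
    congr 1
    · simp [hij]
    · refine sum_congr rfl fun v hv => ?_
      obtain ⟨hvj, hvi⟩ := mem_r.1 hv
      simp [card_insert_of_notMem, hij, hvi.symm, hvj.symm]
  have hj : ∑ v ∈ univ.erase j, k j v * c #({i, j} ∪ {j, v})
      = k j i * c 2 + ∑ v ∈ r, k j v * c 3 := by
    rw [← add_sum_erase _ _ (mem_erase.2 ⟨hij, mem_univ i⟩), erase_right_comm]
    congr 1
    · simp [card_pair hij.symm]
    · refine sum_congr rfl fun v hv => ?_
      obtain ⟨hvj, hvi⟩ := mem_r.1 hv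
      simp [card_insert_of_notMem, hij, hvi.symm, hvj.symm]
  have hu : ∀ u ∈ r, ∑ v ∈ univ.erase u, k u v * c #({i, j} ∪ {u, v})
      = k i u * c 3 + k j u * c 3 + ∑ v ∈ r.erase u, k u v * c 4 := by
    intro u hu
    obtain ⟨huj, hui⟩ := mem_r.1 hu
    rw [sum_eq_add_add_sum_erase_erase (mem_erase.2 ⟨hui.symm, mem_univ i⟩)
      (mem_erase.2 ⟨huj.symm, mem_univ j⟩) hij, erase_right_comm (a := u),
      erase_right_comm (s := univ.erase i) (a := u), hk u i, hk u j]
    congr 1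
    · congr 1 <;> simp [card_insert_of_notMem, hij, hij.symm, hui, huj]
    · refine sum_congr rfl fun v hv => ?_
      obtain ⟨hvu, hvr⟩ := mem_erase.1 hv
      obtain ⟨hvj, hvi⟩ := mem_r.1 hvr
      simp [card_insert_of_notMem, hij, hui, huj, hvi.symm, hvj.symm, hvu.symm]
  rw [sum_eq_add_add_sum_erase_erase (mem_univ i) (mem_univ j) hij, hi, hj, sum_congr rfl hu,
    hk j i]
  simp only [sum_add_distrib, ← sum_mul]
  ring

/- `{u, v} = {i, j}` happens in two ways and sharing exactly one point in four; symmetry of `k`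
folds the four resulting three-index sums into the single one `∑ k i j * k i u`. -/
theorem sum_offDiag_sq_mul_card_union {k : α → α → ℝ} (hk : ∀ i j, k i j = k j i)
    (c : ℕ → ℝ) :
    ∑ i, ∑ j ∈ univ.erase i, ∑ u, ∑ v ∈ univ.erase u, k i j * k u v * c #({i, j} ∪ {u, v})
      = 2 * (∑ i, ∑ j ∈ univ.erase i, k i j ^ 2) * c 2
        + 4 * (∑ i, ∑ j ∈ univ.erase i, ∑ u ∈ (univ.erase i).erase j, k i j * k i u) * c 3
        + (∑ i, ∑ j ∈ univ.erase i, ∑ u ∈ (univ.erase i).erase j,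
            ∑ v ∈ ((univ.erase i).erase j).erase u, k i j * k u v) * c 4 := by
  have hswap : ∑ i, ∑ j ∈ univ.erase i, ∑ v ∈ (univ.erase i).erase j, k i j * k j v
      = ∑ i, ∑ j ∈ univ.erase i, ∑ u ∈ (univ.erase i).erase j, k i j * k i u := by
    rw [sum_univ_sum_erase_comm]
    refine sum_congr rfl fun i _ => sum_congr rfl fun j _ => ?_
    rw [erase_right_comm, hk j i]
  calc _ = ∑ i, ∑ j ∈ univ.erase i,
        k i j * ∑ u, ∑ v ∈ univ.erase u, k u v * c #({i, j} ∪ {u, v}) := by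
        simp only [mul_sum, mul_assoc]
    _ = ∑ i, ∑ j ∈ univ.erase i, (k i j ^ 2 * (2 * c 2)
          + (∑ v ∈ (univ.erase i).erase j, k i j * k i v) * (2 * c 3)
          + (∑ v ∈ (univ.erase i).erase j, k i j * k j v) * (2 * c 3)
          + (∑ u ∈ (univ.erase i).erase j,
              ∑ v ∈ ((univ.erase i).erase j).erase u, k i j * k u v) * c 4) := by
        refine sum_congr rfl fun i _ => sum_congr rfl fun j hj => ?_
        rw [sum_offDiag_mul_card_union_pair hk c (ne_of_mem_erase hj).symm]
        simp only [← mul_sum, sum_add_distrib]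
        ring
    _ = _ := by
        simp only [sum_add_distrib, ← sum_mul, hswap]
        ring

end

theorem var_alpha_general (n t : ℕ) (ht : 2 ≤ t) (ht' : t ≤ n - 2)
    (k : Fin n → Fin n → ℝ) (hsym : ∀ i j, k i j = k j i) :
    let E : (Equiv.Perm (Fin n) → ℝ) → ℝ :=
      fun f => (∑ π : Equiv.Perm (Fin n), f π) / (Nat.factorial n : ℝ)
    let α : Equiv.Perm (Fin n) → ℝ := fun π =>
      (1 / ((t : ℝ) * ((t : ℝ) - 1))) *
        ∑ i : Fin n, ∑ j ∈ univ.erase i,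
          (if (π i : ℕ) < t ∧ (π j : ℕ) < t then k i j else 0)
    let kbar : ℝ :=
      (∑ i : Fin n, ∑ j ∈ univ.erase i, k i j) / ((n : ℝ) * ((n : ℝ) - 1))
    let R1 : ℝ := ∑ i : Fin n, ∑ j ∈ univ.erase i, (k i j) ^ 2
    let R2 : ℝ := ∑ i : Fin n, ∑ j ∈ univ.erase i,
      ∑ u ∈ (univ.erase i).erase j, k i j * k i u
    let R3 : ℝ := ∑ i : Fin n, ∑ j ∈ univ.erase i,
      ∑ u ∈ (univ.erase i).erase j, ∑ v ∈ ((univ.erase i).erase j).erase u,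
        k i j * k u v
    let p1 : ℝ := ((t : ℝ) * ((t : ℝ) - 1)) / ((n : ℝ) * ((n : ℝ) - 1))
    let p2 : ℝ := p1 * (((t : ℝ) - 2) / ((n : ℝ) - 2))
    let p3 : ℝ := p2 * (((t : ℝ) - 3) / ((n : ℝ) - 3))
    E (fun π => (α π) ^ 2) - (E α) ^ 2
      = (2 * R1 * p1 + 4 * R2 * p2 + R3 * p3) / ((t : ℝ) ^ 2 * ((t : ℝ) - 1) ^ 2)
        - kbar ^ 2 := by
  intro E α kbar R1 R2 R3 p1 p2 p3
  set T : Finset (Fin n) := {x | (x : ℕ) < t}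
  have hT : #T = t := by simp [T, Fin.card_filter_val_lt]; omega
  have hα (π : Equiv.Perm (Fin n)) :
      α π = 1 / ((t : ℝ) * ((t : ℝ) - 1)) * pairSumWithin T k π := by
    simp [α, pairSumWithin, T]
  have hp1 : mapsToProb T 2 = p1 := by rw [mapsToProb_two, hT, Fintype.card_fin]
  have hp2 : mapsToProb T 3 = p2 := by
    rw [mapsToProb_succ, hp1, hT, Fintype.card_fin, Nat.cast_ofNat]
  have hp3 : mapsToProb T 4 = p3 := by
    rw [mapsToProb_succ, hp2, hT, Fintype.card_fin, Nat.cast_ofNat]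
  have ht2 : (2 : ℝ) ≤ t := by exact_mod_cast ht
  have ht1 : (t : ℝ) - 1 ≠ 0 := by linarith
  have hmean : E α = kbar := by
    simp only [E, hα, ← mul_sum]
    rw [sum_pairSumWithin, Fintype.card_fin, hp1]
    simp only [kbar, p1]
    field_simp
  have hsq : E (fun π => α π ^ 2)
      = (2 * R1 * p1 + 4 * R2 * p2 + R3 * p3) / ((t : ℝ) ^ 2 * ((t : ℝ) - 1) ^ 2) := by
    simp only [E, hα, mul_pow, ← mul_sum]
    rw [sum_pairSumWithin_sq, sum_offDiag_sq_mul_card_union hsym, Fintype.card_fin, hp1, hp2,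
      hp3]
    simp only [R1, R2, R3]
    field_simp
  rw [hmean, hsq]

/-- Under the permutation null,
`Var(α(t)) = (2R₁p₁(t) + 4R₂p₂(t) + R₃p₃(t)) / (t²(t-1)²) - k̄²`. -/
theorem var_alpha (n t : ℕ) (hn : 4 ≤ n) (ht : 2 ≤ t) (ht' : t ≤ n - 2)
    (k : Fin n → Fin n → ℝ) (hsym : ∀ i j, k i j = k j i) :
    let E : (Equiv.Perm (Fin n) → ℝ) → ℝ :=
      fun f => (∑ π : Equiv.Perm (Fin n), f π) / (Nat.factorial n : ℝ)
    let α : Equiv.Perm (Fin n) → ℝ := fun π =>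
      (1 / ((t : ℝ) * ((t : ℝ) - 1))) *
        ∑ i : Fin n, ∑ j ∈ univ.erase i,
          (if (π i : ℕ) < t ∧ (π j : ℕ) < t then k i j else 0)
    let kbar : ℝ :=
      (∑ i : Fin n, ∑ j ∈ univ.erase i, k i j) / ((n : ℝ) * ((n : ℝ) - 1))
    let R1 : ℝ := ∑ i : Fin n, ∑ j ∈ univ.erase i, (k i j) ^ 2
    let R2 : ℝ := ∑ i : Fin n, ∑ j ∈ univ.erase i,
      ∑ u ∈ (univ.erase i).erase j, k i j * k i u
    let R3 : ℝ := ∑ i : Fin n, ∑ j ∈ univ.erase i,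
      ∑ u ∈ (univ.erase i).erase j, ∑ v ∈ ((univ.erase i).erase j).erase u,
        k i j * k u v
    let p1 : ℝ := ((t : ℝ) * ((t : ℝ) - 1)) / ((n : ℝ) * ((n : ℝ) - 1))
    let p2 : ℝ := p1 * (((t : ℝ) - 2) / ((n : ℝ) - 2))
    let p3 : ℝ := p2 * (((t : ℝ) - 3) / ((n : ℝ) - 3))
    E (fun π => (α π) ^ 2) - (E α) ^ 2
      = (2 * R1 * p1 + 4 * R2 * p2 + R3 * p3) / ((t : ℝ) ^ 2 * ((t : ℝ) - 1) ^ 2)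
        - kbar ^ 2 :=
  var_alpha_general n t ht ht' k hsym
end

section
/- Define $\rho^*_D(u,v) = \frac{(u \wedge v)(1 - (u \vee v))}{\sqrt{u(1-u)v(1-v)}}$ for $u,v \in (0,1)$. Then for every fixed $x \in (0,1)$, $\lim_{s \nearrow x} \frac{\partial \rho^*_D(s,x)}{\partial s} = \frac{1}{2x(1-x)}$ and $\lim_{s \searrow x} \frac{\partial \rho^*_D(s,x)}{\partial s} = -\frac{1}{2x(1-x)}$. -/
open Set

/-- The one-sided derivatives of `ρ*_D(s, x)` in `s` at the diagonal are `±1/(2x(1-x))`. -/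
theorem rhoD_diagonal_derivative
    (ρ : ℝ → ℝ → ℝ)
    (hρ : ∀ u v, ρ u v = (min u v * (1 - max u v)) / Real.sqrt (u * (1 - u) * v * (1 - v)))
    (x : ℝ) (hx : x ∈ Ioo (0 : ℝ) 1) :
    Filter.Tendsto (fun s => deriv (fun s' => ρ s' x) s)
        (nhdsWithin x (Iio x)) (nhds (1 / (2 * x * (1 - x)))) ∧
    Filter.Tendsto (fun s => deriv (fun s' => ρ s' x) s)
        (nhdsWithin x (Ioi x)) (nhds (-(1 / (2 * x * (1 - x))))) := by
  obtain ⟨hx0, hx1⟩ := hx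
  have hx1' : (0:ℝ) < 1 - x := by linarith
  have hqpos : ∀ s ∈ Ioo (0:ℝ) 1, 0 < s * (1 - s) * x * (1 - x) := by
    intro s hs
    have h1 : (0:ℝ) < 1 - s := by linarith [hs.2]
    have h2 := hs.1
    positivity
  have hqx : (0:ℝ) < x * (1 - x) * x * (1 - x) := hqpos x ⟨hx0, hx1⟩
  have hsqrtqx : Real.sqrt (x * (1 - x) * x * (1 - x)) = x * (1 - x) := by
    rw [show x * (1 - x) * x * (1 - x) = (x * (1 - x)) ^ 2 by ring,
      Real.sqrt_sq (by positivity)]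
  have hsx0 : Real.sqrt (x * (1 - x) * x * (1 - x)) ≠ 0 := by
    rw [hsqrtqx]; positivity
  -- continuity of the sqrt of the quartic
  have hsqcont : ContinuousAt (fun s => Real.sqrt (s * (1 - s) * x * (1 - x))) x := by
    apply Real.continuous_sqrt.continuousAt.comp
    fun_prop
  -- derivative of the quartic
  have hq' : ∀ s : ℝ, HasDerivAt (fun s' => s' * (1 - s') * x * (1 - x))
      ((1 * (1 - s) + s * (0 - 1)) * x * (1 - x)) s := by
    intro s
    exact (((hasDerivAt_id s).mul ((hasDerivAt_const s 1).sub
      (hasDerivAt_id s))).mul_const x).mul_const (1 - x)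
  constructor
  · -- left side: s < x
    set D : ℝ → ℝ := fun s =>
      (1 * (1 - x) * Real.sqrt (s * (1 - s) * x * (1 - x)) -
        s * (1 - x) * ((1 * (1 - s) + s * (0 - 1)) * x * (1 - x) /
          (2 * Real.sqrt (s * (1 - s) * x * (1 - x))))) /
        Real.sqrt (s * (1 - s) * x * (1 - x)) ^ 2 with hD
    have hderiv : ∀ s ∈ Ioo (0:ℝ) x, deriv (fun s' => ρ s' x) s = D s := by
      intro s hs
      have hs1 : s ∈ Ioo (0:ℝ) 1 := ⟨hs.1, lt_trans hs.2 hx1⟩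
      have hq : 0 < s * (1 - s) * x * (1 - x) := hqpos s hs1
      have hsq : Real.sqrt (s * (1 - s) * x * (1 - x)) ≠ 0 := by positivity
      have h2 : HasDerivAt (fun s' => Real.sqrt (s' * (1 - s') * x * (1 - x)))
          ((1 * (1 - s) + s * (0 - 1)) * x * (1 - x) /
            (2 * Real.sqrt (s * (1 - s) * x * (1 - x)))) s :=
        (hq' s).sqrt (ne_of_gt hq)
      have h3 : HasDerivAt (fun s' => s' * (1 - x)) (1 * (1 - x)) s :=
        (hasDerivAt_id s).mul_const (1 - x)
      have hd : HasDerivAt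
          (fun s' => s' * (1 - x) / Real.sqrt (s' * (1 - s') * x * (1 - x))) (D s) s :=
        h3.div h2 hsq
      have heq : (fun s' => ρ s' x) =ᶠ[nhds s]
          (fun s' => s' * (1 - x) / Real.sqrt (s' * (1 - s') * x * (1 - x))) := by
        filter_upwards [Ioo_mem_nhds hs.1 hs.2] with t ht
        rw [hρ, min_eq_left ht.2.le, max_eq_right ht.2.le]
      exact (hd.congr_of_eventuallyEq heq).deriv
    have hDx : D x = 1 / (2 * x * (1 - x)) := by
      rw [hD]
      simp only [hsqrtqx]
      have hx0' : x ≠ 0 := ne_of_gt hx0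
      have hx1'' : (1 - x) ≠ 0 := ne_of_gt hx1'
      field_simp
      ring
    have hcont : ContinuousAt D x := by
      rw [hD]
      apply ContinuousAt.div
      · apply ContinuousAt.sub
        · exact hsqcont.const_mul _
        · apply ContinuousAt.mul (by fun_prop)
          apply ContinuousAt.div (by fun_prop) (continuousAt_const.mul hsqcont)
          simpa using hsx0
      · exact hsqcont.pow 2
      · exact pow_ne_zero _ hsx0
    have htend : Filter.Tendsto D (nhdsWithin x (Iio x)) (nhds (1 / (2 * x * (1 - x)))) := by
      rw [← hDx]
      exact hcont.continuousWithinAt.tendsto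
    have hmem : Ioo (0:ℝ) x ∈ nhdsWithin x (Iio x) :=
      mem_nhdsWithin.mpr ⟨Ioi 0, isOpen_Ioi, hx0, fun y hy => ⟨hy.1, hy.2⟩⟩
    exact htend.congr' (Filter.eventuallyEq_of_mem hmem fun s hs => (hderiv s hs).symm)
  · -- right side: s > x
    set D : ℝ → ℝ := fun s =>
      ((0 * (1 - s) + x * (0 - 1)) * Real.sqrt (s * (1 - s) * x * (1 - x)) -
        x * (1 - s) * ((1 * (1 - s) + s * (0 - 1)) * x * (1 - x) /
          (2 * Real.sqrt (s * (1 - s) * x * (1 - x))))) /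
        Real.sqrt (s * (1 - s) * x * (1 - x)) ^ 2 with hD
    have hderiv : ∀ s ∈ Ioo x (1:ℝ), deriv (fun s' => ρ s' x) s = D s := by
      intro s hs
      have hs1 : s ∈ Ioo (0:ℝ) 1 := ⟨lt_trans hx0 hs.1, hs.2⟩
      have hq : 0 < s * (1 - s) * x * (1 - x) := hqpos s hs1
      have hsq : Real.sqrt (s * (1 - s) * x * (1 - x)) ≠ 0 := by positivity
      have h2 : HasDerivAt (fun s' => Real.sqrt (s' * (1 - s') * x * (1 - x)))
          ((1 * (1 - s) + s * (0 - 1)) * x * (1 - x) /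
            (2 * Real.sqrt (s * (1 - s) * x * (1 - x)))) s :=
        (hq' s).sqrt (ne_of_gt hq)
      have h3 : HasDerivAt (fun s' => x * (1 - s')) (0 * (1 - s) + x * (0 - 1)) s :=
        (hasDerivAt_const s x).mul ((hasDerivAt_const s 1).sub (hasDerivAt_id s))
      have hd : HasDerivAt
          (fun s' => x * (1 - s') / Real.sqrt (s' * (1 - s') * x * (1 - x))) (D s) s :=
        h3.div h2 hsq
      have heq : (fun s' => ρ s' x) =ᶠ[nhds s]
          (fun s' => x * (1 - s') / Real.sqrt (s' * (1 - s') * x * (1 - x))) := by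
        filter_upwards [Ioo_mem_nhds hs.1 hs.2] with t ht
        rw [hρ, min_eq_right ht.1.le, max_eq_left ht.1.le]
      exact (hd.congr_of_eventuallyEq heq).deriv
    have hDx : D x = -(1 / (2 * x * (1 - x))) := by
      rw [hD]
      simp only [hsqrtqx]
      have hx0' : x ≠ 0 := ne_of_gt hx0
      have hx1'' : (1 - x) ≠ 0 := ne_of_gt hx1'
      field_simp
      ring
    have hcont : ContinuousAt D x := by
      rw [hD]
      apply ContinuousAt.div
      · apply ContinuousAt.sub
        · exact ContinuousAt.mul (by fun_prop) hsqcont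
        · apply ContinuousAt.mul (by fun_prop)
          apply ContinuousAt.div (by fun_prop) (continuousAt_const.mul hsqcont)
          simpa using hsx0
      · exact hsqcont.pow 2
      · exact pow_ne_zero _ hsx0
    have htend : Filter.Tendsto D (nhdsWithin x (Ioi x)) (nhds (-(1 / (2 * x * (1 - x))))) := by
      rw [← hDx]
      exact hcont.continuousWithinAt.tendsto
    have hmem : Ioo x (1:ℝ) ∈ nhdsWithin x (Ioi x) :=
      mem_nhdsWithin.mpr ⟨Iio 1, isOpen_Iio, hx1, fun y hy => ⟨hy.2, hy.1⟩⟩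
    exact htend.congr' (Filter.eventuallyEq_of_mem hmem fun s hs => (hderiv s hs).symm)
end
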